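/- The range (column space) of the partial transpose ρ₆₆^{T_B} equals the 6-dimensional subspace of ℂ⁹ consisting of all vectors V = (V₀,…,V₈) satisfying V₄ = −V₀, V₆ = V₅ − V₂ and V₇ = V₃; equivalently, all vectors of the form (A, B, C, D, −A, E, E−C, D, F) with A, B, C, D, E, F ∈ ℂ. -/

import Mathlib

open Matrix ComplexOrder

noncomputable def N66 : Matrix (Fin 9) (Fin 9) ℂ :=
  !![1, 0, 0, 0, 0, 0, 0, 0, -1;
     0, 2, 0, -1, 0, 0, 0, 0, 0;
     0, 0, 1, 0, 0, 0, 1, 0, 0;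
     0, -1, 0, 1, 0, 0, 0, 0, 1;
     0, 0, 0, 0, 1, 0, 1, 0, 0;
     0, 0, 0, 0, 0, 1, 0, -1, 0;
     0, 0, 1, 0, 1, 0, 2, 0, 0;
     0, 0, 0, 0, 0, -1, 0, 1, 0;
     -1, 0, 0, 1, 0, 0, 0, 0, 3]

/-- The index map `(i, j) ↦ 3 i + j` from `Fin 3 × Fin 3` to `Fin 9`. -/
def idx (p : Fin 3 × Fin 3) : Fin 9 :=
  ⟨3 * p.1.val + p.2.val, by have h1 := p.1.isLt; have h2 := p.2.isLt; omega⟩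

/-- The state `ρ₆₆`, viewed as an operator on `ℂ³ ⊗ ℂ³`. -/
noncomputable def rho66 : Matrix (Fin 3 × Fin 3) (Fin 3 × Fin 3) ℂ :=
  fun p q => (1 / 13 : ℂ) * N66 (idx p) (idx q)

/-- The partial transpose on the second factor: `(ρ^{T_B})_{(i,j),(k,l)} = ρ_{(i,l),(k,j)}`. -/
noncomputable def ptrans (ρ : Matrix (Fin 3 × Fin 3) (Fin 3 × Fin 3) ℂ) :
    Matrix (Fin 3 × Fin 3) (Fin 3 × Fin 3) ℂ :=
  fun p q => ρ (p.1, q.2) (q.1, p.2)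

/-
The range of `ρ₆₆^{T_B}` is cut out by the three vectors of its left kernel, which give the
relations `V₄ = -V₀`, `V₆ = V₅ - V₂`, `V₇ = V₃`. Conversely, on vectors supported on the
coordinates `0, 1, 2, 3, 5, 8`, the map `x ↦ (ρ₆₆^{T_B} x)_{0,1,2,3,5,8}` is invertible, which gives an
explicit preimage of every `V` satisfying the relations.
-/

def tensorVec (a : Matrix (Fin 3) (Fin 3) ℂ) : Fin 3 × Fin 3 → ℂ := fun p => a p.1 p.2

lemma ptrans_rho66_mulVec (x : Fin 3 × Fin 3 → ℂ) :
    ptrans rho66 *ᵥ x = (1 / 13 : ℂ) • tensorVec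
      !![x (0,0) - x (1,1) + x (2,2), 2 * x (0,1), x (0,2) - x (2,0);
        x (1,0) + x (2,1), -x (0,0) + x (1,1) - x (2,2), x (1,2) + x (2,0);
        -x (0,2) + x (1,2) + 2 * x (2,0), x (1,0) + x (2,1), x (0,0) - x (1,1) + 3 * x (2,2)] := by
  ext p
  fin_cases p <;>
  · simp only [mulVec, dotProduct, ptrans, rho66, idx, N66, tensorVec, Pi.smul_apply,
      smul_eq_mul, Fintype.sum_prod_type, Fin.sum_univ_three]
    norm_num
    try ring

lemma ptrans_rho66_mulVec_relations (x : Fin 3 × Fin 3 → ℂ) :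
    let V := ptrans rho66 *ᵥ x
    V (1, 1) = -V (0, 0) ∧ V (2, 0) = V (1, 2) - V (0, 2) ∧ V (2, 1) = V (1, 0) := by
  refine ⟨?_, ?_, ?_⟩ <;>
  · simp only [ptrans_rho66_mulVec, Pi.smul_apply, smul_eq_mul, tensorVec, of_apply, cons_val',
      cons_val_zero, cons_val_one, cons_val_two, tail_cons, vecHead]
    try ring

lemma ptrans_rho66_mulVec_preimage (V : Fin 3 × Fin 3 → ℂ) (h₄ : V (1, 1) = -V (0, 0))
    (h₆ : V (2, 0) = V (1, 2) - V (0, 2)) (h₇ : V (2, 1) = V (1, 0)) :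
    ptrans rho66 *ᵥ ((13 : ℂ) • tensorVec
      !![(3 * V (0,0) - V (2,2)) / 2, V (0,1) / 2, V (0,2);
        V (1,0), 0, V (1,2);
        0, 0, (V (2,2) - V (0,0)) / 2]) = V := by
  rw [ptrans_rho66_mulVec]
  ext p
  fin_cases p <;>
  · simp only [Pi.smul_apply, smul_eq_mul, tensorVec, of_apply, cons_val', cons_val,
      cons_val_fin_one, Fin.zero_eta, Fin.mk_one, Fin.reduceFinMk, h₄, h₆, h₇]
    ring

/-- The range of `ρ₆₆^{T_B}` consists exactly of the vectors
`(A, B, C, D, -A, E, E-C, D, F)`, i.e. those `V` with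
`V₄ = -V₀`, `V₆ = V₅ - V₂` and `V₇ = V₃`. -/
theorem rho66_ptrans_range :
    ∀ V : Fin 3 × Fin 3 → ℂ,
      V ∈ LinearMap.range (ptrans rho66).mulVecLin ↔
        (V (1, 1) = -V (0, 0) ∧ V (2, 0) = V (1, 2) - V (0, 2) ∧
          V (2, 1) = V (1, 0)) := by
  intro V
  constructor
  · rintro ⟨x, rfl⟩
    exact ptrans_rho66_mulVec_relations x
  · rintro ⟨h₄, h₆, h₇⟩
    exact ⟨_, ptrans_rho66_mulVec_preimage V h₄ h₆ h₇⟩
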